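/- Let Γ ⊆ ℝ be an additive subgroup and ℤ[Γ] its group ring, viewed as the subring of the Novikov ring Nov(Γ) consisting of finitely supported elements. Let S ⊆ ℤ[Γ] be the multiplicative set of elements whose term of maximal exponent has coefficient 1. Then every element of S is invertible in Nov(Γ), and hence the localization S⁻¹ℤ[Γ] embeds as a subring of Nov(Γ). -/

import Mathlib

/-!
Multiplying `p` by the monomial `τ^(-γ₀)` of its leading exponent turns it into `1 - u` with all
exponents of `u` negative. As `Γ ⊆ ℝ` is archimedean, the exponents of `uⁿ` eventually drop below
any bound, so the geometric series `∑ uⁿ` is an element of `Nov(Γ)`, and it inverts `1 - u`.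
Leading terms multiply, so these `p` form a monoid, and the map from the localization is injective
because `ℤ[Γ] → Nov(Γ)` is.
-/

/-- The underlying set of the Novikov ring `Nov(Γ)` of an additive subgroup `Γ ⊆ ℝ`:
functions `Γ → ℤ` whose support meets each interval `[c, ∞)` in a finite set. -/
def Nov (Γ : AddSubgroup ℝ) : Type :=
  {x : Γ → ℤ // ∀ c : ℝ, {γ : Γ | x γ ≠ 0 ∧ c ≤ (γ : ℝ)}.Finite}

open AddMonoidAlgebra

lemma UniqueAdd.of_forall_le {G : Type*} [AddCommMonoid G] [LinearOrder G]
    [IsOrderedCancelAddMonoid G] {A B : Finset G} {a₀ b₀ : G}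
    (hA : ∀ a ∈ A, a ≤ a₀) (hB : ∀ b ∈ B, b ≤ b₀) : UniqueAdd A B a₀ b₀ := by
  intro a b ha hb hab
  obtain rfl : a = a₀ := (hA a ha).eq_of_not_lt fun hlt =>
    (add_lt_add_of_lt_of_le hlt (hB b hb)).ne hab
  exact ⟨rfl, add_left_cancel hab⟩

namespace AddMonoidAlgebra

section Ordered

variable {R G : Type*} [Semiring R] [AddCommMonoid G] [LinearOrder G]

lemma le_nsmul_of_mem_support_pow [IsOrderedAddMonoid G] {u : R[G]} {m : G}
    (hu : ∀ g ∈ u.coeff.support, g ≤ m) (n : ℕ) :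
    ∀ g ∈ (u ^ n).coeff.support, g ≤ n • m := by
  classical
  induction n with
  | zero =>
    intro g hg
    rw [pow_zero] at hg
    rw [Finset.mem_zero.1 (support_coeff_one_subset hg), zero_nsmul]
  | succ n ih =>
    intro g hg
    rw [pow_succ] at hg
    obtain ⟨a, ha, b, hb, rfl⟩ := Finset.mem_add.1 (support_coeff_mul_subset _ _ hg)
    rw [succ_nsmul]
    exact add_le_add (ih a ha) (hu b hb)

variable (R G) [Nontrivial R] [IsOrderedCancelAddMonoid G]

def leadingCoeffOneSubmonoid : Submonoid R[G] where
  carrier := {p | ∃ g₀ ∈ p.coeff.support, (∀ g ∈ p.coeff.support, g ≤ g₀) ∧ p.coeff g₀ = 1}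
  one_mem' := by
    classical
    have h1 : (1 : R[G]).coeff 0 = 1 := by rw [one_def, coeff_single, Finsupp.single_eq_same]
    refine ⟨0, by simp, fun g hg => (Finset.mem_zero.1 (support_coeff_one_subset hg)).le, h1⟩
  mul_mem' := by
    classical
    rintro p q ⟨g₀, -, hp, hp₁⟩ ⟨h₀, -, hq, hq₁⟩
    have hpq : (p * q).coeff (g₀ + h₀) = 1 := by
      rw [coeff_mul_add_of_uniqueAdd (UniqueAdd.of_forall_le hp hq), hp₁, hq₁, one_mul]
    refine ⟨g₀ + h₀, by simp [hpq], fun g hg => ?_, hpq⟩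
    obtain ⟨a, ha, b, hb, rfl⟩ := Finset.mem_add.1 (support_coeff_mul_subset _ _ hg)
    exact add_le_add (hp a ha) (hq b hb)

end Ordered

lemma lt_zero_of_mem_support_one_sub_single_neg_mul {R G : Type*} [Ring R] [AddCommGroup G]
    [LinearOrder G] [IsOrderedAddMonoid G] {p : R[G]} {g₀ : G}
    (hp : ∀ g ∈ p.coeff.support, g ≤ g₀) (hp₁ : p.coeff g₀ = 1) :
    ∀ g ∈ (1 - single (-g₀) 1 * p).coeff.support, g < 0 := by
  classical
  intro g hg
  rw [Finsupp.mem_support_iff, coeff_sub, Finsupp.sub_apply, coeff_single_mul_apply, neg_neg,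
    one_mul, one_def, coeff_single, Finsupp.single_apply] at hg
  rcases eq_or_ne g 0 with rfl | hg₀
  · simp [hp₁] at hg
  · rw [if_neg (Ne.symm hg₀), zero_sub, neg_ne_zero, ← Finsupp.mem_support_iff] at hg
    exact lt_of_le_of_ne (by simpa using hp _ hg) hg₀

end AddMonoidAlgebra

namespace Nov

variable {Γ : AddSubgroup ℝ}

lemma exists_pow_coeff_eq_zero {R : Type*} [Semiring R] {u : R[Γ]}
    (hu : ∀ γ ∈ u.coeff.support, γ < 0) (c : ℝ) :
    ∃ N : ℕ, ∀ n ≥ N, ∀ δ : Γ, c ≤ δ → (u ^ n).coeff δ = 0 := by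
  rcases u.coeff.support.eq_empty_or_nonempty with hempty | hne
  · refine ⟨1, fun n hn δ _ => ?_⟩
    rw [Finsupp.support_eq_empty, coeff_eq_zero] at hempty
    rw [hempty, zero_pow (by omega), coeff_zero, Finsupp.coe_zero, Pi.zero_apply]
  set m := u.coeff.support.max' hne
  have hm : (m : ℝ) < 0 := hu m (u.coeff.support.max'_mem hne)
  obtain ⟨N, hN⟩ := exists_nat_gt (c / m)
  refine ⟨N, fun n hn δ hδ => Finsupp.notMem_support_iff.1 fun hδu => ?_⟩
  have hδn : (δ : ℝ) ≤ n * m := by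
    have := le_nsmul_of_mem_support_pow (m := m) (u.coeff.support.le_max' · ·) n δ hδu
    rwa [← Subtype.coe_le_coe, AddSubgroup.coe_nsmul, nsmul_eq_mul] at this
  have : (N : ℝ) * m < c := (div_lt_iff_of_neg hm).1 hN
  nlinarith [(Nat.cast_le (α := ℝ)).2 hn]

lemma finsum_pow_coeff_eq_sum_range {R : Type*} [Semiring R] {u : R[Γ]} {N : ℕ} {δ : Γ}
    (hN : ∀ n ≥ N, (u ^ n).coeff δ = 0) :
    ∑ᶠ n : ℕ, (u ^ n).coeff δ = ∑ n ∈ Finset.range N, (u ^ n).coeff δ :=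
  finsum_eq_finsetSum_of_support_subset _ fun n hn =>
    Finset.mem_range.2 (not_le.1 fun h => hn (hN n h))

noncomputable def geomSeries (u : ℤ[Γ]) (hu : ∀ γ ∈ u.coeff.support, γ < 0) : Nov Γ :=
  ⟨fun γ => ∑ᶠ n : ℕ, (u ^ n).coeff γ, fun c => by
    obtain ⟨N, hN⟩ := exists_pow_coeff_eq_zero hu c
    refine ((Finset.range N).biUnion fun n => (u ^ n).coeff.support).finite_toSet.subset ?_
    rintro γ ⟨hγ, hcγ⟩
    obtain ⟨n, hn⟩ : ∃ n, (u ^ n).coeff γ ≠ 0 := by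
      by_contra! h
      exact hγ (finsum_eq_zero_of_forall_eq_zero h)
    simp only [Finset.coe_biUnion, Finset.coe_range, Set.mem_iUnion, Set.mem_Iio, Finset.mem_coe,
      Finsupp.mem_support_iff]
    exact ⟨n, not_le.1 fun h => hn (hN n h γ hcγ), hn⟩⟩

variable [CommRing (Nov Γ)] (hadd : ∀ x y : Nov Γ, (x + y).val = fun γ => x.val γ + y.val γ)
    (hmul : ∀ x y : Nov Γ, ∀ γ : Γ,
      (x * y).val γ = ∑ᶠ p : Γ × Γ, if p.1 + p.2 = γ then x.val p.1 * y.val p.2 else 0)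
    (ι : ℤ[Γ] →+* Nov Γ) (hι : ∀ (p : ℤ[Γ]) (γ : Γ), (ι p).val γ = p.coeff γ)

include hmul hι in
lemma val_iota_mul (a : ℤ[Γ]) (x : Nov Γ) (γ : Γ) :
    (ι a * x).val γ = a.coeff.sum fun b r => r * x.val (-b + γ) := by
  classical
  have hsupp : (Function.support fun p : Γ × Γ =>
      if p.1 + p.2 = γ then (ι a).val p.1 * x.val p.2 else 0) ⊆
      a.coeff.support.image fun b => (b, -b + γ) := by
    rintro ⟨b, c⟩ hbc
    simp only [Function.mem_support, ne_eq, ite_eq_right_iff, not_forall, hι] at hbc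
    obtain ⟨rfl, hbc⟩ := hbc
    exact Finset.mem_image.2 ⟨b, Finsupp.mem_support_iff.2 (left_ne_zero_of_mul hbc), by simp⟩
  rw [hmul, finsum_eq_finsetSum_of_support_subset _ hsupp,
    Finset.sum_image fun b _ c _ h => (Prod.mk.inj h).1]
  exact Finset.sum_congr rfl fun b _ => by rw [if_pos (add_neg_cancel_left b γ), hι]

include hadd hmul hι

lemma geomSeries_eq_one_add_mul (u : ℤ[Γ]) (hu : ∀ γ ∈ u.coeff.support, γ < 0) :
    geomSeries u hu = 1 + ι u * geomSeries u hu := by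
  refine Subtype.ext <| funext fun γ =>
    (?_ : _ = (1 : Nov Γ).val γ + _).trans (congrFun (hadd _ _) γ).symm
  obtain ⟨N, hN⟩ := exists_pow_coeff_eq_zero hu γ
  have hval : ∀ δ : Γ, (γ : ℝ) ≤ δ →
      (geomSeries u hu).val δ = ∑ n ∈ Finset.range N, (u ^ n).coeff δ :=
    fun δ hδ => finsum_pow_coeff_eq_sum_range fun n hn => hN n hn δ hδ
  rw [← map_one ι, hι, val_iota_mul hmul ι hι]
  calc (geomSeries u hu).val γ = ∑ n ∈ Finset.range (N + 1), (u ^ n).coeff γ :=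
        finsum_pow_coeff_eq_sum_range fun n hn => hN n (by omega) γ le_rfl
    _ = (1 : ℤ[Γ]).coeff γ +
          u.coeff.sum fun b r => r * ∑ n ∈ Finset.range N, (u ^ n).coeff (-b + γ) := by
        simp_rw [Finset.sum_range_succ', pow_succ', coeff_mul_apply_left, Finsupp.sum,
          Finset.mul_sum]
        rw [Finset.sum_comm, pow_zero, add_comm]
    _ = (1 : ℤ[Γ]).coeff γ + u.coeff.sum fun b r => r * (geomSeries u hu).val (-b + γ) := by
        refine congrArg _ (Finset.sum_congr rfl fun b hb => ?_)
        have hb_neg : (b : ℝ) < 0 := hu b hb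
        exact congrArg (u.coeff b * ·) (hval (-b + γ) (by push_cast; linarith)).symm

lemma isUnit_one_sub_iota (u : ℤ[Γ]) (hu : ∀ γ ∈ u.coeff.support, γ < 0) :
    IsUnit (1 - ι u) :=
  IsUnit.of_mul_eq_one (geomSeries u hu) <| by
    linear_combination geomSeries_eq_one_add_mul hadd hmul ι hι u hu

lemma isUnit_iota_of_mem {p : ℤ[Γ]} (hp : p ∈ leadingCoeffOneSubmonoid ℤ Γ) : IsUnit (ι p) := by
  obtain ⟨g₀, -, hle, hp₁⟩ := hp
  have hsingle : single g₀ (1 : ℤ) * single (-g₀) 1 = 1 := by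
    rw [single_mul_single, add_neg_cancel, one_mul, one_def]
  have hfactor : p = single g₀ 1 * (1 - (1 - single (-g₀) 1 * p)) := by
    rw [sub_sub_cancel, ← mul_assoc, hsingle, one_mul]
  rw [hfactor, map_mul, map_sub, map_one]
  exact ((IsUnit.of_mul_eq_one _ hsingle).map ι).mul
    (isUnit_one_sub_iota hadd hmul ι hι _ (lt_zero_of_mem_support_one_sub_single_neg_mul hle hp₁))

end Nov

/-- Let `Γ ⊆ ℝ` be an additive subgroup, and regard the group ring `ℤ[Γ]` as a subring of
the Novikov ring `Nov(Γ)` (via a coefficient-preserving ring embedding `ι`).  Let `S` be the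
multiplicative set of elements of `ℤ[Γ]` whose term of maximal exponent has coefficient `1`.
Then every element of `S` becomes invertible in `Nov(Γ)`, and the localization `S⁻¹ℤ[Γ]`
embeds as a subring of `Nov(Γ)`. -/
theorem leading_coeff_one_invertible_in_novikov (Γ : AddSubgroup ℝ)
    [inst : CommRing (Nov Γ)]
    (hadd : ∀ x y : Nov Γ, (x + y).val = fun γ => x.val γ + y.val γ)
    (hmul : ∀ x y : Nov Γ, ∀ γ : Γ,
      (x * y).val γ = ∑ᶠ p : Γ × Γ, if p.1 + p.2 = γ then x.val p.1 * y.val p.2 else 0)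
    (ι : AddMonoidAlgebra ℤ Γ →+* Nov Γ)
    (hι : ∀ (p : AddMonoidAlgebra ℤ Γ) (γ : Γ), (ι p).val γ = p.coeff γ) :
    ∃ S : Submonoid (AddMonoidAlgebra ℤ Γ),
      (S : Set (AddMonoidAlgebra ℤ Γ)) =
        {p | p ≠ 0 ∧ ∃ γ₀ : Γ, γ₀ ∈ p.coeff.support ∧
          (∀ γ : Γ, γ ∈ p.coeff.support → (γ : ℝ) ≤ (γ₀ : ℝ)) ∧ p.coeff γ₀ = 1} ∧
      (∀ p ∈ S, IsUnit (ι p)) ∧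
      ∃ g : Localization S →+* Nov Γ, Function.Injective g ∧
        ∀ p : AddMonoidAlgebra ℤ Γ, g (algebraMap (AddMonoidAlgebra ℤ Γ) (Localization S) p) = ι p := by
  have hunit : ∀ s : leadingCoeffOneSubmonoid ℤ Γ, IsUnit (ι s) :=
    fun s => Nov.isUnit_iota_of_mem hadd hmul ι hι s.2
  have hι_inj : Function.Injective ι := fun x y h => by
    ext γ
    rw [← hι, ← hι, h]
  refine ⟨leadingCoeffOneSubmonoid ℤ Γ, ?_, fun p hp => hunit ⟨p, hp⟩, IsLocalization.lift hunit,
    ?_, IsLocalization.lift_eq hunit⟩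
  · ext p
    refine ⟨fun hp => ⟨?_, hp⟩, And.right⟩
    rintro rfl
    obtain ⟨g₀, hg₀, -⟩ := hp
    simp at hg₀
  · refine (IsLocalization.lift_injective_iff hunit).2 fun x y => ⟨fun h => ?_, fun h => ?_⟩
    · simpa only [IsLocalization.lift_eq] using congrArg (IsLocalization.lift hunit) h
    · rw [hι_inj h]
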